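/- arXiv:2504.18947 — 2 statements merged into one kernel-verified Lean document; each statement's English description precedes it below -/
import Mathlib

section
/- Let Y be a subspace of X. Then Y has property-SNP if and only if Y^⊥ has the Haar property in X*. -/
open scoped ENNReal

noncomputable section

/-- `χ_ρ(g) = sup { |g v| : ρ v ≤ 1 } ∈ [0,∞]`. -/
def chi {V : Type*} [AddCommGroup V] [Module ℝ V] [TopologicalSpace V]
    (ρ : V → ℝ) (g : V →L[ℝ] ℝ) : ℝ≥0∞ :=
  ⨆ v ∈ {v : V | ρ v ≤ 1}, ENNReal.ofReal |g v|

/-- `χ_ρ^W(f)` for a functional `f` on a subspace `W`. -/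
def chiSub {V : Type*} [AddCommGroup V] [Module ℝ V] [TopologicalSpace V]
    (W : Submodule ℝ V) (ρ : V → ℝ) (f : W →L[ℝ] ℝ) : ℝ≥0∞ :=
  chi (fun w : W => ρ (w : V)) f

/-- `ft` is a Hahn-Banach extension of the pair `(f, ρ)` on the subspace `W`. -/
def IsHBE {V : Type*} [AddCommGroup V] [Module ℝ V] [TopologicalSpace V]
    (W : Submodule ℝ V) (ρ : V → ℝ) (f : W →L[ℝ] ℝ) (ft : V →L[ℝ] ℝ) : Prop :=
  ft.comp W.subtypeL = f ∧ chi ρ ft = chiSub W ρ f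

/-- Property-SNP of a subspace `W` with respect to the family `p` of seminorms. -/
def SNP {V : Type*} [AddCommGroup V] [Module ℝ V] [TopologicalSpace V]
    {ι : Type*} (p : ι → V → ℝ) (W : Submodule ℝ V) : Prop :=
  ∀ f : W →L[ℝ] ℝ, ∃ i, chiSub W (p i) f < ⊤ ∧ ∃ ft : V →L[ℝ] ℝ,
    ∀ j, (∀ v, p i v ≤ p j v) →
      IsHBE W (p j) f ft ∧ ∀ g : V →L[ℝ] ℝ, IsHBE W (p j) f g → g = ft

/-- The annihilator `W^⊥ = {g ∈ V* : g|_W = 0}`. -/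
def ann {V : Type*} [AddCommGroup V] [Module ℝ V] [TopologicalSpace V]
    (W : Submodule ℝ V) : Set (V →L[ℝ] ℝ) :=
  {g | ∀ y ∈ W, g y = 0}

/-- `d_{χ_ρ}(f, S) = inf {χ_ρ(f - s) : s ∈ S}`. -/
def distChi {V : Type*} [AddCommGroup V] [Module ℝ V] [TopologicalSpace V]
    (ρ : V → ℝ) (f : V →L[ℝ] ℝ) (S : Set (V →L[ℝ] ℝ)) : ℝ≥0∞ :=
  ⨅ s ∈ S, chi ρ (f - s)

/-- The metric projection `P_{S,χ_ρ}(f)`. -/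
def projSet {V : Type*} [AddCommGroup V] [Module ℝ V] [TopologicalSpace V]
    (ρ : V → ℝ) (S : Set (V →L[ℝ] ℝ)) (f : V →L[ℝ] ℝ) : Set (V →L[ℝ] ℝ) :=
  {s ∈ S | chi ρ (f - s) = distChi ρ f S}

/-- The Haar property of a subset `S` of the dual, with respect to the family `p`:
every `f` has a unique `𝒫_μ`-simultaneous best approximation in `S` for some `μ ∈ 𝒫`. -/
def HaarProperty {V : Type*} [AddCommGroup V] [Module ℝ V] [TopologicalSpace V]
    {ι : Type*} (p : ι → V → ℝ) (S : Set (V →L[ℝ] ℝ)) : Prop :=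
  ∀ f : V →L[ℝ] ℝ, ∃ i, ∃ s₀ ∈ S, ∀ j, (∀ v, p i v ≤ p j v) → projSet (p j) S f = {s₀}


/-!
Subtracting an element `s` of `Y^⊥` from `f ∈ X*` does not change `f|_Y`, so `s ↦ f - s` is a
bijection from `Y^⊥` onto the extensions of `f|_Y`. By Hahn–Banach, `d_{χ_ρ}(f, Y^⊥) = χ_ρ^Y(f|_Y)`,
hence `s` is a best approximation of `f` in `Y^⊥` exactly when `f - s` is an HBE of `(f|_Y, ρ)`,
and uniqueness on either side is uniqueness on the other.
-/

open Filter Topology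
open scoped NNReal

section Chi

variable {V : Type*} [AddCommGroup V] [Module ℝ V] [TopologicalSpace V]

lemma ofReal_abs_le_chi {ρ : V → ℝ} (g : V →L[ℝ] ℝ) {v : V} (hv : ρ v ≤ 1) :
    ENNReal.ofReal |g v| ≤ chi ρ g :=
  le_iSup₂ (f := fun v (_ : v ∈ {v : V | ρ v ≤ 1}) => ENNReal.ofReal |g v|) v hv

lemma chi_le_of_abs_le {ρ : V → ℝ} {g : V →L[ℝ] ℝ} (c : ℝ≥0)
    (h : ∀ v, |g v| ≤ c * ρ v) : chi ρ g ≤ c :=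
  iSup₂_le fun v hv => ENNReal.ofReal_le_of_le_toReal <|
    (h v).trans (mul_le_of_le_one_right c.coe_nonneg hv)

lemma chi_anti {ρ₁ ρ₂ : V → ℝ} (h : ∀ v, ρ₁ v ≤ ρ₂ v) (g : V →L[ℝ] ℝ) :
    chi ρ₂ g ≤ chi ρ₁ g :=
  iSup₂_le fun _ hv => ofReal_abs_le_chi g ((h _).trans hv)

lemma abs_apply_le_chi_mul (ρ : Seminorm ℝ V) {g : V →L[ℝ] ℝ} (hg : chi ρ g ≠ ⊤) (v : V) :
    |g v| ≤ (chi ρ g).toReal * ρ v := by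
  set C := (chi ρ g).toReal
  -- `ρ v` may vanish, so rescale by any `r > ρ v` and let `r ↓ ρ v`.
  have hr : ∀ r, ρ v < r → |g v| ≤ C * r := by
    intro r hvr
    have hr : 0 < r := (apply_nonneg ρ v).trans_lt hvr
    have hunit : ρ (r⁻¹ • v) ≤ 1 := by
      rw [map_smul_eq_mul, norm_inv, Real.norm_of_nonneg hr.le]
      exact inv_mul_le_one_of_le₀ hvr.le hr.le
    have := (ENNReal.ofReal_le_iff_le_toReal hg).1 (ofReal_abs_le_chi g hunit)
    rwa [map_smul, smul_eq_mul, abs_mul, abs_inv, abs_of_pos hr, inv_mul_le_iff₀ hr,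
      mul_comm] at this
  have hlim : Tendsto (fun r => C * r) (𝓝[>] (ρ v)) (𝓝 (C * ρ v)) :=
    ((continuous_const_mul C).tendsto _).mono_left nhdsWithin_le_nhds
  exact ge_of_tendsto hlim (eventually_nhdsWithin_of_forall hr)

end Chi

section Subspace

variable {X : Type*} [AddCommGroup X] [Module ℝ X] [TopologicalSpace X]
  {ι : Type*} {p : SeminormFamily ℝ X ι} {Y : Submodule ℝ X}

lemma chiSub_comp_subtypeL_le_chi (ρ : X → ℝ) (g : X →L[ℝ] ℝ) :
    chiSub Y ρ (g.comp Y.subtypeL) ≤ chi ρ g :=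
  iSup₂_le fun w hw => ofReal_abs_le_chi g (v := (w : X)) hw

lemma sub_mem_ann_iff {f g : X →L[ℝ] ℝ} :
    f - g ∈ ann Y ↔ f.comp Y.subtypeL = g.comp Y.subtypeL := by
  simp only [ann, Set.mem_ofPred_eq, sub_apply, sub_eq_zero,
    ContinuousLinearMap.ext_iff, ContinuousLinearMap.comp_apply, Submodule.subtypeL_apply,
    Subtype.forall]

lemma exists_isHBE (hp : WithSeminorms p) (i : ι) (f : Y →L[ℝ] ℝ)
    (hf : chiSub Y (p i) f ≠ ⊤) : ∃ g : X →L[ℝ] ℝ, IsHBE Y (p i) f g := by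
  set C := (chiSub Y (p i) f).toNNReal
  have hfC : ∀ y : Y, f y ≤ (C • p i) y := fun y =>
    (le_abs_self _).trans (abs_apply_le_chi_mul ((p i).comp Y.subtype) hf y)
  obtain ⟨g, hgf, hgC⟩ :=
    Module.Dual.exists_extension_of_le_seminorm_real Y (f : Y →ₗ[ℝ] ℝ) hfC
  have hg : Continuous g := hp.continuous_real_rng g ⟨{i}, C, fun x => by
    simpa only [Finset.sup_singleton] using (le_abs_self _).trans (hgC x)⟩
  have hrestr : (⟨g, hg⟩ : X →L[ℝ] ℝ).comp Y.subtypeL = f := ContinuousLinearMap.ext hgf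
  refine ⟨⟨g, hg⟩, hrestr, le_antisymm ?_ ?_⟩
  · rw [← ENNReal.coe_toNNReal hf]
    exact chi_le_of_abs_le C hgC
  · simpa only [hrestr] using chiSub_comp_subtypeL_le_chi (Y := Y) (p i) ⟨g, hg⟩

lemma exists_chiSub_lt_top [Nonempty ι] (hp : WithSeminorms p) (hdir : Directed (· ≤ ·) p)
    (f : Y →L[ℝ] ℝ) : ∃ i, chiSub Y (p i) f < ⊤ := by
  obtain ⟨s, C, -, hC⟩ := Seminorm.bound_comp_of_isInducing (p := (f : Y →ₗ[ℝ] ℝ).toSeminorm)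
    f.continuous.norm hp (f := Y.subtype) IsInducing.subtypeVal
  obtain ⟨i, hi⟩ := hdir.finset_le s
  refine ⟨i, (chi_le_of_abs_le C fun y => ?_).trans_lt ENNReal.coe_lt_top⟩
  calc |f y| = (f : Y →ₗ[ℝ] ℝ).toSeminorm y := rfl
    _ ≤ C * s.sup p y := hC y
    _ ≤ C * p i y := mul_le_mul_of_nonneg_left (Finset.sup_le hi (y : X)) C.coe_nonneg

lemma distChi_ann (hp : WithSeminorms p) (i : ι) (f : X →L[ℝ] ℝ) :
    distChi (p i) f (ann Y) = chiSub Y (p i) (f.comp Y.subtypeL) := by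
  refine le_antisymm ?_ (le_iInf₂ fun s hs => ?_)
  · rcases eq_or_ne (chiSub Y (p i) (f.comp Y.subtypeL)) ⊤ with htop | htop
    · exact htop ▸ le_top
    obtain ⟨g, hgf, hg⟩ := exists_isHBE hp i _ htop
    have hfg : f - g ∈ ann Y := sub_mem_ann_iff.2 hgf.symm
    calc distChi (p i) f (ann Y) ≤ chi (p i) (f - (f - g)) := iInf₂_le _ hfg
      _ = _ := by rw [sub_sub_cancel, hg]
  · have hrestr : (f - s).comp Y.subtypeL = f.comp Y.subtypeL :=
      (sub_mem_ann_iff.1 (by rwa [sub_sub_cancel])).symm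
    exact hrestr ▸ chiSub_comp_subtypeL_le_chi _ (f - s)

lemma mem_projSet_ann_iff (hp : WithSeminorms p) (i : ι) (f s : X →L[ℝ] ℝ) :
    s ∈ projSet (p i) (ann Y) f ↔ IsHBE Y (p i) (f.comp Y.subtypeL) (f - s) := by
  rw [projSet, Set.mem_ofPred_eq, IsHBE, distChi_ann hp, eq_comm (a := (f - s).comp _),
    ← sub_mem_ann_iff, sub_sub_cancel]

lemma projSet_ann_eq_singleton_iff (hp : WithSeminorms p) (i : ι) (f s₀ : X →L[ℝ] ℝ) :
    projSet (p i) (ann Y) f = {s₀} ↔ IsHBE Y (p i) (f.comp Y.subtypeL) (f - s₀) ∧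
      ∀ g, IsHBE Y (p i) (f.comp Y.subtypeL) g → g = f - s₀ := by
  simp only [Set.eq_singleton_iff_unique_mem, mem_projSet_ann_iff hp]
  refine and_congr_right fun _ => ⟨fun h g hg => ?_, fun h s hs => sub_right_injective (h _ hs)⟩
  rw [← h (f - g) (by rwa [sub_sub_cancel]), sub_sub_cancel]

end Subspace

theorem statement4 {X : Type*} [AddCommGroup X] [Module ℝ X] [TopologicalSpace X]
    {ι : Type*} [Nonempty ι] (p : SeminormFamily ℝ X ι) (hp : WithSeminorms p)
    (hdir : Directed (· ≤ ·) p) (Y : Submodule ℝ X) :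
    SNP (fun i => ⇑(p i)) Y ↔ HaarProperty (fun i => ⇑(p i)) (ann Y) := by
  constructor
  · intro hSNP f
    obtain ⟨i, -, ft, hft⟩ := hSNP (f.comp Y.subtypeL)
    have hrestr : ft.comp Y.subtypeL = f.comp Y.subtypeL := (hft i fun _ => le_rfl).1.1
    refine ⟨i, f - ft, sub_mem_ann_iff.2 hrestr.symm, fun j hij => ?_⟩
    rw [projSet_ann_eq_singleton_iff hp, sub_sub_cancel]
    exact hft j hij
  · intro hHaar f
    obtain ⟨i₀, hfin⟩ := exists_chiSub_lt_top hp hdir f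
    obtain ⟨g, hgf, -⟩ := exists_isHBE hp i₀ f hfin.ne
    obtain ⟨i₁, s₀, -, hs₀⟩ := hHaar g
    obtain ⟨k, hk₀, hk₁⟩ := hdir i₀ i₁
    refine ⟨k, (chi_anti (fun w : Y => hk₀ w) f).trans_lt hfin, g - s₀, fun j hkj => ?_⟩
    rw [← hgf, ← projSet_ann_eq_singleton_iff hp]
    exact hs₀ j fun v => (hk₁ v).trans (hkj v)
end
end

section
/- Let f₀ ∈ C_p(Z) be such that |f₀| does not attain its supremum, i.e., for every x ∈ Z there exists y ∈ Z with |f₀(x)| < |f₀(y)|. Then the one-dimensional subspace Y = span{f₀} does not have property-SNP in C_p(Z) with respect to 𝒫. -/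
open scoped ENNReal

noncomputable section

/-- The space `C_p(Z)` of continuous real-valued functions on `Z`, as a submodule of
`Z → ℝ`; its subspace topology is the topology of pointwise convergence. -/
def Cp (Z : Type*) [TopologicalSpace Z] : Submodule ℝ (Z → ℝ) where
  carrier := {f | Continuous f}
  add_mem' hf hg := hf.add hg
  zero_mem' := continuous_const
  smul_mem' c f hf := hf.const_smul c

/-- The generating seminorm `ρ_F(f) = max_{x ∈ F} |f x|` of the topology of
pointwise convergence, for a finite `F ⊆ Z`. -/
def rhoP {Z : Type*} [TopologicalSpace Z] (F : Finset Z) (f : Cp Z) : ℝ :=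
  ⨆ x ∈ F, |(f : Z → ℝ) x|

/-!
Let `f` be the coordinate functional `c • f₀ ↦ c` on `Y`, and let `F`, `f̃` witness
property-SNP for it. As `χ_{ρ_F}(f̃) < ∞`, `f̃` vanishes on every function vanishing on `F`.
Since `|f₀|` does not attain its supremum, some `y` has `|f₀ y| > ρ_F(f₀)`; in particular `y ∉ F`. For a bump `g` with
`g y = 1` and `g = 0` on `F`, the function `h = f₀ - f₀(y) • g` has `f̃ h = 1` and
`ρ_{F ∪ {y}}(h) ≤ ρ_F(f₀)`, whereas `χ_{ρ_{F ∪ {y}}}(f̃) = χ^Y_{ρ_{F ∪ {y}}}(f) ≤ 1 / |f₀ y|`.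
Hence `1 ≤ ρ_F(f₀) / |f₀ y| < 1`.
-/

section Chi

variable {V : Type*} [AddCommGroup V] [Module ℝ V] [TopologicalSpace V]

theorem chi_le_ofReal_iff (p : Seminorm ℝ V) (g : V →L[ℝ] ℝ) {C : ℝ} (hC : 0 ≤ C) :
    chi p g ≤ ENNReal.ofReal C ↔ ∀ v, |g v| ≤ C * p v := by
  constructor
  · intro hg v
    have hball : ∀ r > p v, |g v| ≤ C * r := by
      intro r hr
      have hr0 : 0 < r := (apply_nonneg p v).trans_lt hr
      have hmem : p (r⁻¹ • v) ≤ 1 := by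
        rw [map_smul_eq_mul, Real.norm_eq_abs, abs_inv, abs_of_pos hr0]
        exact inv_mul_le_one_of_le₀ hr.le hr0.le
      have hle : ENNReal.ofReal |g (r⁻¹ • v)| ≤ ENNReal.ofReal C :=
        (le_iSup₂ (f := fun v (_ : v ∈ {v : V | p v ≤ 1}) => ENNReal.ofReal |g v|) _ hmem).trans hg
      rw [ENNReal.ofReal_le_ofReal_iff hC, map_smul, smul_eq_mul, abs_mul, abs_inv,
        abs_of_pos hr0, inv_mul_le_iff₀ hr0, mul_comm] at hle
      exact hle
    exact ge_of_tendsto ((continuous_const.mul continuous_id).tendsto (p v) |>.mono_left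
      nhdsWithin_le_nhds) (eventually_nhdsWithin_of_forall (s := Set.Ioi (p v)) hball)
  · intro hg
    refine iSup₂_le fun v hv => ENNReal.ofReal_le_ofReal ?_
    calc |g v| ≤ C * p v := hg v
      _ ≤ C := mul_le_of_le_one_right hC hv

theorem map_eq_zero_of_chi_ne_top {p : Seminorm ℝ V} {g : V →L[ℝ] ℝ} (hg : chi p g ≠ ⊤) {v : V}
    (hv : p v = 0) : g v = 0 := by
  have := (chi_le_ofReal_iff p g ENNReal.toReal_nonneg).1 (ENNReal.ofReal_toReal hg).ge v
  rwa [hv, mul_zero, abs_nonpos_iff] at this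

theorem chiSub_span_singleton_le (p : Seminorm ℝ V) {v : V} (hv : 0 < p v)
    (f : (ℝ ∙ v) →L[ℝ] ℝ) :
    chiSub (ℝ ∙ v) p f ≤
      ENNReal.ofReal (|f ⟨v, Submodule.mem_span_singleton_self v⟩| / p v) := by
  refine (chi_le_ofReal_iff (p.comp (ℝ ∙ v).subtype) f (by positivity)).2 fun w => ?_
  obtain ⟨c, hc⟩ := Submodule.mem_span_singleton.1 w.2
  obtain rfl : w = c • ⟨v, Submodule.mem_span_singleton_self v⟩ := Subtype.ext hc.symm
  rw [map_smul, map_smul_eq_mul, smul_eq_mul, abs_mul, Real.norm_eq_abs, Seminorm.comp_apply,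
    Submodule.subtype_apply]
  exact le_of_eq (by field_simp)

end Chi

section RhoP

variable {Z : Type*} [TopologicalSpace Z]

theorem rhoP_le {F : Finset Z} {f : Cp Z} {M : ℝ} (hM : 0 ≤ M)
    (h : ∀ x ∈ F, |(f : Z → ℝ) x| ≤ M) : rhoP F f ≤ M :=
  Real.iSup_le (fun x => Real.iSup_le (h x) hM) hM

theorem le_rhoP {F : Finset Z} (f : Cp Z) {x : Z} (hx : x ∈ F) :
    |(f : Z → ℝ) x| ≤ rhoP F f :=
  le_ciSup₂ (f := fun x (_ : x ∈ F) => |(f : Z → ℝ) x|)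
    ((F.finite_toSet.image fun x => |(f : Z → ℝ) x|).bddAbove.mono
      (Set.iUnion_subset fun _ => Set.range_subset_iff.2 fun hx =>
        Set.mem_image_of_mem (fun x => |(f : Z → ℝ) x|) (Finset.mem_coe.2 hx))) x hx

theorem rhoP_nonneg (F : Finset Z) (f : Cp Z) : 0 ≤ rhoP F f :=
  Real.iSup_nonneg fun _ => Real.iSup_nonneg fun _ => abs_nonneg _

def rhoSeminorm (F : Finset Z) : Seminorm ℝ (Cp Z) :=
  Seminorm.ofSMulLE (rhoP F)
    (le_antisymm (rhoP_le le_rfl fun _ _ => by simp) (rhoP_nonneg F 0))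
    (fun f g => rhoP_le (add_nonneg (rhoP_nonneg F f) (rhoP_nonneg F g)) fun x hx =>
      (abs_add_le _ _).trans (add_le_add (le_rhoP f hx) (le_rhoP g hx)))
    (fun r f => rhoP_le (mul_nonneg (norm_nonneg r) (rhoP_nonneg F f)) fun x hx => by
      rw [Submodule.coe_smul, Pi.smul_apply, smul_eq_mul, abs_mul, ← Real.norm_eq_abs]
      exact mul_le_mul_of_nonneg_left (le_rhoP f hx) (norm_nonneg r))

@[simp]
theorem coe_rhoSeminorm (F : Finset Z) : ⇑(rhoSeminorm F) = rhoP F := rfl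

theorem rhoP_mono {F G : Finset Z} (hFG : F ⊆ G) (f : Cp Z) : rhoP F f ≤ rhoP G f :=
  rhoP_le (rhoP_nonneg G f) fun _ hx => le_rhoP f (hFG hx)

theorem exists_rhoP_lt_abs [Nonempty Z] {f : Cp Z}
    (hf : ∀ x : Z, ∃ y : Z, |(f : Z → ℝ) x| < |(f : Z → ℝ) y|) (F : Finset Z) :
    ∃ y, rhoP F f < |(f : Z → ℝ) y| := by
  obtain ⟨x₀, hx₀⟩ : ∃ x₀, ∀ x ∈ F, |(f : Z → ℝ) x| ≤ |(f : Z → ℝ) x₀| := by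
    rcases F.eq_empty_or_nonempty with rfl | hF
    · exact ⟨Classical.arbitrary Z, by simp⟩
    · obtain ⟨x₀, -, hx₀⟩ := F.exists_max_image (fun x => |(f : Z → ℝ) x|) hF
      exact ⟨x₀, hx₀⟩
  obtain ⟨y, hy⟩ := hf x₀
  exact ⟨y, (rhoP_le (abs_nonneg _) hx₀).trans_lt hy⟩

theorem Cp.exists_eq_one_and_eqOn_zero [CompletelyRegularSpace Z] {K : Set Z}
    (hK : IsClosed K) {y : Z} (hy : y ∉ K) :
    ∃ g : Cp Z, (g : Z → ℝ) y = 1 ∧ ∀ x ∈ K, (g : Z → ℝ) x = 0 := by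
  obtain ⟨u, hu, huy, huK⟩ := CompletelyRegularSpace.completely_regular y K hK hy
  refine ⟨⟨fun z => 1 - u z, continuous_const.sub (continuous_subtype_val.comp hu)⟩, ?_, ?_⟩
  · simp [huy]
  · intro x hx
    simp [huK hx]

theorem one_le_mul_rhoP_of_chi_insert_le [CompletelyRegularSpace Z] [T1Space Z] [DecidableEq Z]
    {F : Finset Z} {y : Z} (hy : y ∉ F) {f₀ : Cp Z} {ft : Cp Z →L[ℝ] ℝ} (hft₀ : ft f₀ = 1)
    (hF : chi (rhoP F) ft ≠ ⊤) {C : ℝ} (hC : 0 ≤ C)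
    (hG : chi (rhoP (insert y F)) ft ≤ ENNReal.ofReal C) : 1 ≤ C * rhoP F f₀ := by
  obtain ⟨g, hgy, hgF⟩ := Cp.exists_eq_one_and_eqOn_zero F.finite_toSet.isClosed hy
  have hftg : ft g = 0 :=
    map_eq_zero_of_chi_ne_top (p := rhoSeminorm F) hF <|
      le_antisymm (rhoP_le le_rfl fun x hx => by simp [hgF x hx]) (rhoP_nonneg F g)
  have hρ : rhoP (insert y F) (f₀ - (f₀ : Z → ℝ) y • g) ≤ rhoP F f₀ := by
    refine rhoP_le (rhoP_nonneg F f₀) fun x hx => ?_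
    rcases Finset.mem_insert.1 hx with rfl | hx
    · simp [hgy, rhoP_nonneg]
    · simpa [hgF x hx] using le_rhoP f₀ hx
  calc 1 = |ft (f₀ - (f₀ : Z → ℝ) y • g)| := by simp [hft₀, hftg]
    _ ≤ C * rhoP (insert y F) (f₀ - (f₀ : Z → ℝ) y • g) :=
      (chi_le_ofReal_iff (rhoSeminorm _) ft hC).1 hG _
    _ ≤ C * rhoP F f₀ := mul_le_mul_of_nonneg_left hρ hC

end RhoP

theorem statement17 {Z : Type*} [TopologicalSpace Z] [Nonempty Z] [T35Space Z]
    (f₀ : Cp Z)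
    (hsup : ∀ x : Z, ∃ y : Z, |(f₀ : Z → ℝ) x| < |(f₀ : Z → ℝ) y|) :
    ¬ SNP (fun F : Finset Z => rhoP F) (ℝ ∙ f₀) := by
  classical
  intro hSNP
  have hf₀ : f₀ ≠ 0 := by
    rintro rfl
    obtain ⟨y, hy⟩ := hsup (Classical.arbitrary Z)
    simp at hy
  let f : (ℝ ∙ f₀) →L[ℝ] ℝ :=
    LinearMap.toContinuousLinearMap (E := ℝ ∙ f₀) (LinearEquiv.coord ℝ (Cp Z) f₀ hf₀).toLinearMap
  have hf : f ⟨f₀, Submodule.mem_span_singleton_self f₀⟩ = 1 := LinearEquiv.coord_self ..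
  obtain ⟨F, hF, ft, hft⟩ := hSNP f
  obtain ⟨⟨hext, hchiF⟩, -⟩ := hft F fun _ => le_rfl
  obtain ⟨y, hy⟩ := exists_rhoP_lt_abs hsup F
  obtain ⟨⟨-, hchiG⟩, -⟩ := hft (insert y F) (rhoP_mono (F.subset_insert y))
  have hy₀ : 0 < |(f₀ : Z → ℝ) y| := (rhoP_nonneg F f₀).trans_lt hy
  have hχ : chi (rhoP (insert y F)) ft ≤ ENNReal.ofReal |(f₀ : Z → ℝ) y|⁻¹ := by
    have hGy := le_rhoP f₀ (F.mem_insert_self y)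
    rw [hchiG]
    refine (chiSub_span_singleton_le (rhoSeminorm _) (hy₀.trans_le hGy) f).trans ?_
    rw [coe_rhoSeminorm, hf, abs_one, one_div]
    exact ENNReal.ofReal_le_ofReal (inv_anti₀ hy₀ hGy)
  have key := one_le_mul_rhoP_of_chi_insert_le (fun hyF => (le_rhoP f₀ hyF).not_gt hy)
    ((congrArg (· ⟨f₀, Submodule.mem_span_singleton_self f₀⟩) hext).trans hf)
    (hchiF ▸ hF.ne) (inv_nonneg.2 hy₀.le) hχ
  rw [le_inv_mul_iff₀ hy₀, mul_one] at key
  exact key.not_gt hy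
end
end
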